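/- For all natural numbers n, j, k, the binomial coefficients satisfy C(n,j)·C(n,k) = ∑_{i=0}^{min(j,k)} C(j+k−i, j) · C(j, i) · C(n, j+k−i). -/

import Mathlib

theorem choose_mul_choose_eq_sum (n j k : ℕ) :
    n.choose j * n.choose k =
      ∑ i ∈ Finset.range (min j k + 1),
        (j + k - i).choose j * j.choose i * n.choose (j + k - i) := by
  rcases le_or_gt j n with hjn | hjn
  · have hV : n.choose k = ∑ i ∈ Finset.range (k + 1),
        j.choose i * (n - j).choose (k - i) := by
      conv_lhs => rw [← Nat.add_sub_cancel' hjn]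
      rw [Nat.add_choose_eq, Finset.Nat.sum_antidiagonal_eq_sum_range_succ_mk]
    have key : n.choose j * n.choose k = ∑ i ∈ Finset.range (k + 1),
        (j + k - i).choose j * j.choose i * n.choose (j + k - i) := by
      rw [hV, Finset.mul_sum]
      refine Finset.sum_congr rfl fun i hi => ?_
      have hik : i ≤ k := Nat.lt_succ_iff.mp (Finset.mem_range.mp hi)
      have hjk : j + k - i = j + (k - i) := by omega
      rw [hjk]
      rcases le_or_gt (j + (k - i)) n with h | h
      · have := Nat.choose_mul (n := n) (k := j + (k - i)) (s := j)
          (Nat.le_add_right _ _)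
        simp only [Nat.add_sub_cancel_left] at this
        rw [mul_left_comm, ← this]; ring
      · rw [Nat.choose_eq_zero_of_lt h,
          Nat.choose_eq_zero_of_lt (by omega : n - j < k - i)]
        ring
    rw [key]
    refine (Finset.sum_subset (Finset.range_subset_range.mpr (by omega)) ?_).symm
    intro i hi hni
    have h1 : i ≤ k := Nat.lt_succ_iff.mp (Finset.mem_range.mp hi)
    have h2 : min j k < i := by
      by_contra h; exact hni (Finset.mem_range.mpr (by omega))
    have hji : j < i := by omega
    rw [Nat.choose_eq_zero_of_lt hji]; ring
  · rw [Nat.choose_eq_zero_of_lt hjn, Nat.zero_mul]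
    refine (Finset.sum_eq_zero fun i hi => ?_).symm
    have : i ≤ min j k := Nat.lt_succ_iff.mp (Finset.mem_range.mp hi)
    rw [Nat.choose_eq_zero_of_lt (show n < j + k - i by omega)]
    ring
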